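/- Let κ_1, κ_2 ∈ ℝ, e_x, e_y ∈ ℂ not both zero, and s ∈ ℂ with s ≠ 0. Define x_1 = e_x e^{iκ_1} s, x_2 = ((e_x+e_y)/√2) e^{iκ_2} s, x_3 = e_y e^{-iκ_1} s, x_4 = ((−e_x+e_y)/√2) e^{-iκ_2} s. Then c_2 := −x_1 conj(x_4) + conj(x_3) x_2 = (|s|²/√2)(|e_x|² + |e_y|²) e^{i(κ_1+κ_2)}. In particular c_2 ≠ 0 and if κ_1 + κ_2 ∈ (-π, π] then arg c_2 = κ_1 + κ_2. -/

import Mathlib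

/-!
Expanding `c₂`, each product of antenna outputs contributes `|s|² / 2` times a polarization
product times `exp (i (κ₁ + κ₂))`. The cross terms `eₓ conj e_y` enter once from each of the
two products with opposite signs and cancel, leaving `(|eₓ|² + |e_y|²) |s|² / √2` as a positive
real modulus in front of `exp (i (κ₁ + κ₂))`; the argument of `c₂` is therefore `κ₁ + κ₂`
whenever that angle lies in the principal range.
-/

open Complex

theorem neg_mul_conj_add_conj_mul_eq (κ₁ κ₂ : ℝ) (ex ey s : ℂ) :
    -(ex * exp (I * κ₁) * s
        * starRingEnd ℂ ((-ex + ey) / Real.sqrt 2 * exp (-(I * κ₂)) * s))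
      + starRingEnd ℂ (ey * exp (-(I * κ₁)) * s)
        * ((ex + ey) / Real.sqrt 2 * exp (I * κ₂) * s)
    = ((‖s‖ ^ 2 / Real.sqrt 2 : ℝ) : ℂ) * ((‖ex‖ ^ 2 + ‖ey‖ ^ 2 : ℝ) : ℂ)
        * exp (I * (κ₁ + κ₂ : ℝ)) := by
  have hsqrt2 : (Real.sqrt 2 : ℂ) ≠ 0 := by
    exact_mod_cast Real.sqrt_ne_zero'.mpr two_pos
  simp only [map_mul, map_div₀, map_add, map_neg, ← exp_conj, conj_I, conj_ofReal, neg_mul,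
    neg_neg]
  push_cast
  rw [mul_add I, exp_add, ← mul_conj' s, ← mul_conj' ex, ← mul_conj' ey]
  field_simp
  ring

theorem norm_sq_add_norm_sq_pos {a b : ℂ} (h : a ≠ 0 ∨ b ≠ 0) : 0 < ‖a‖ ^ 2 + ‖b‖ ^ 2 := by
  rcases h with h | h
  · exact add_pos_of_pos_of_nonneg (pow_pos (norm_pos_iff.mpr h) 2) (sq_nonneg _)
  · exact add_pos_of_nonneg_of_pos (sq_nonneg _) (pow_pos (norm_pos_iff.mpr h) 2)

theorem arg_ofReal_mul_exp_I_mul {r θ : ℝ} (hr : 0 < r) (hθ : θ ∈ Set.Ioc (-Real.pi) Real.pi) :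
    arg (r * exp (I * θ)) = θ := by
  rw [arg_real_mul _ hr, mul_comm, exp_mul_I]
  exact arg_cos_add_sin_mul_I hθ

theorem stmt_8 (κ₁ κ₂ : ℝ) (ex ey : ℂ) (hne : ex ≠ 0 ∨ ey ≠ 0)
    (s : ℂ) (hs : s ≠ 0)
    (x₁ x₂ x₃ x₄ : ℂ)
    (hx₁ : x₁ = ex * Complex.exp (Complex.I * κ₁) * s)
    (hx₂ : x₂ = ((ex + ey) / Real.sqrt 2) * Complex.exp (Complex.I * κ₂) * s)
    (hx₃ : x₃ = ey * Complex.exp (-(Complex.I * κ₁)) * s)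
    (hx₄ : x₄ = ((-ex + ey) / Real.sqrt 2) * Complex.exp (-(Complex.I * κ₂)) * s)
    (c₂ : ℂ)
    (hc₂ : c₂ = -(x₁ * starRingEnd ℂ x₄) + starRingEnd ℂ x₃ * x₂) :
    c₂ = ((‖s‖ ^ 2 / Real.sqrt 2 : ℝ) : ℂ)
          * ((‖ex‖ ^ 2 + ‖ey‖ ^ 2 : ℝ) : ℂ)
          * Complex.exp (Complex.I * (κ₁ + κ₂ : ℝ)) ∧
    c₂ ≠ 0 ∧
    (κ₁ + κ₂ ∈ Set.Ioc (-Real.pi) Real.pi → Complex.arg c₂ = κ₁ + κ₂) := by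
  have hc₂_eq := neg_mul_conj_add_conj_mul_eq κ₁ κ₂ ex ey s
  rw [← hx₁, ← hx₂, ← hx₃, ← hx₄, ← hc₂] at hc₂_eq
  have hmodulus : 0 < ‖s‖ ^ 2 / Real.sqrt 2 * (‖ex‖ ^ 2 + ‖ey‖ ^ 2) :=
    mul_pos (div_pos (pow_pos (norm_pos_iff.mpr hs) 2) (Real.sqrt_pos.mpr two_pos))
      (norm_sq_add_norm_sq_pos hne)
  rw [← ofReal_mul] at hc₂_eq
  refine ⟨by rw [hc₂_eq, ofReal_mul], ?_, fun hκ => ?_⟩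
  · rw [hc₂_eq]
    exact mul_ne_zero (ofReal_ne_zero.mpr hmodulus.ne') (exp_ne_zero _)
  · rw [hc₂_eq]
    exact arg_ofReal_mul_exp_I_mul hmodulus hκ
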